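/- For every θ ∈ ℝᵈ with ‖θ‖ < √d, the negative population log-likelihood on the hypersurface σ² = 1 − ‖θ‖²/d is a radial function of θ; explicitly, −E_{Z∼N(0,I_d)}[ log f(Z; θ, 1 − ‖θ‖²/d) ] = (d/2)·log(2π·(1−‖θ‖²/d)) + (d+‖θ‖²)/(2·(1−‖θ‖²/d)) − E_{Z∼N(0,1)}[ log c_p( ‖θ‖·Z / (1 − ‖θ‖²/d) ) ]. -/

import Mathlib

open MeasureTheory Real Set
open scoped ENNReal

noncomputable section

namespace OMDA

/-- `t_p(x)`. -/
def tp (p x : ℝ) : ℝ :=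
  (p * Real.exp x - (1 - p) * Real.exp (-x)) / (p * Real.exp x + (1 - p) * Real.exp (-x))

/-- `c_p(x)`. -/
def cp (p x : ℝ) : ℝ := p * Real.exp x + (1 - p) * Real.exp (-x)

/-- The standard normal density on `ℝ`. -/
def phi1 (z : ℝ) : ℝ := Real.exp (-z ^ 2 / 2) / Real.sqrt (2 * π)

/-- Expectation of `g Z` for `Z ∼ N(0,1)`. -/
def gexp (g : ℝ → ℝ) : ℝ := ∫ z : ℝ, g z * phi1 z

/-- The univariate population EM map `m(θ)`. -/
def m (p : ℝ) (d : ℕ) (θ : ℝ) : ℝ :=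
  gexp fun z => tp p (θ * z / (1 - θ ^ 2 / d)) * z

/-- The radial negative population log-likelihood `ℓ(θ)`. -/
def ell (p : ℝ) (d : ℕ) (θ : ℝ) : ℝ :=
  (d / 2 : ℝ) * Real.log (2 * π * (1 - θ ^ 2 / d)) + ((d : ℝ) + θ ^ 2) / (2 * (1 - θ ^ 2 / d))
    - gexp fun z => Real.log (cp p (θ * z / (1 - θ ^ 2 / d)))

/-- `q := 1 - (2p-1)²/2`. -/
def qp (p : ℝ) : ℝ := 1 - (2 * p - 1) ^ 2 / 2

/-- The initialization radius `√(d·(2+q−√(8q+q²))/2)`. -/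
def θmax (p : ℝ) (d : ℕ) : ℝ :=
  Real.sqrt ((d : ℝ) * (2 + qp p - Real.sqrt (8 * qp p + qp p ^ 2)) / 2)

/-- `ρ := (1+θ₀²/d)/(1−θ₀²/d)² · (1 − (2p−1)²/2)`. -/
def ρc (p : ℝ) (d : ℕ) (θ0 : ℝ) : ℝ :=
  (1 + θ0 ^ 2 / d) / (1 - θ0 ^ 2 / d) ^ 2 * (1 - (2 * p - 1) ^ 2 / 2)

/-- `ℝᵈ` with the Euclidean norm. -/
abbrev E (d : ℕ) := EuclideanSpace ℝ (Fin d)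

/-- Density of `N(ν, σ²·I_d)` on `ℝᵈ`. -/
def gpdf (d : ℕ) (ν : E d) (σ2 : ℝ) (x : E d) : ℝ :=
  (2 * π * σ2) ^ (-(d : ℝ) / 2) * Real.exp (-‖x - ν‖ ^ 2 / (2 * σ2))

/-- Density of the mixture `(1−p)·N(ν−θ, σ²I) + p·N(ν+θ, σ²I)`. -/
def mixPdf (p : ℝ) (d : ℕ) (ν θ : E d) (σ2 : ℝ) (x : E d) : ℝ :=
  (1 - p) * gpdf d (ν - θ) σ2 x + p * gpdf d (ν + θ) σ2 x

/-- The population EM operator `M(θ)`. -/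
def Mop (p : ℝ) (d : ℕ) (θ : E d) : E d :=
  ∫ z : E d, (gpdf d 0 1 z * tp p ((inner ℝ θ z : ℝ) / (1 - ‖θ‖ ^ 2 / d))) • z

/-- KL divergence `D_KL[N(0,I_d) ∥ G(θ, σ²)]`, written via densities. -/
def klStd (p : ℝ) (d : ℕ) (θ : E d) (σ2 : ℝ) : ℝ :=
  ∫ z : E d, gpdf d 0 1 z * Real.log (gpdf d 0 1 z / mixPdf p d 0 θ σ2 z)

/-- The standard normal cdf `Φ`. -/
def stdNormCdf (x : ℝ) : ℝ := ∫ z in Iic x, phi1 z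

/-- Misclassification probability of a classifier `h` under the distribution `D`
with class-conditional laws `N(±μ, I_d)` and balanced classes. -/
def errProb (d : ℕ) (μ : E d) (h : E d → ℝ) : ℝ :=
  (1 / 2) * (∫ x in {x | h x ≠ 1}, gpdf d μ 1 x)
    + (1 / 2) * (∫ x in {x | h x ≠ -1}, gpdf d (-μ) 1 x)

/-- The measure `N(ν, I_d)` on `ℝᵈ`, via its density. -/
def gaussMeasure (d : ℕ) (ν : E d) : Measure (E d) :=
  volume.withDensity fun x => ENNReal.ofReal (gpdf d ν 1 x)

/-- The standard Gaussian measure `N(0, I_d)`. -/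
def stdGaussMeasure (d : ℕ) : Measure (E d) := gaussMeasure d 0

/-- The joint distribution `D` of `(X, Y)` on `ℝᵈ × ℝ`. -/
def Dmeas (d : ℕ) (μ : E d) : Measure (E d × ℝ) :=
  (1 / 2 : ℝ≥0∞) • ((gaussMeasure d μ).prod (Measure.dirac (1 : ℝ)))
    + (1 / 2 : ℝ≥0∞) • ((gaussMeasure d (-μ)).prod (Measure.dirac (-1 : ℝ)))

/-- Chi-squared measure with `k` degrees of freedom. -/
def chiSqMeasure (k : ℕ) : Measure ℝ := ProbabilityTheory.gammaMeasure ((k : ℝ) / 2) (1 / 2)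


section AuxNegLoglik

lemma phi1_nonneg (x : ℝ) : 0 ≤ phi1 x := by
  rw [phi1]; positivity

lemma sqrt_two_pi_pos : 0 < Real.sqrt (2 * π) := Real.sqrt_pos.2 (by positivity)

lemma phi1_eq (x : ℝ) : phi1 x = Real.exp (-(1/2) * x ^ 2) * (Real.sqrt (2*π))⁻¹ := by
  rw [phi1, div_eq_mul_inv]
  congr 2
  ring

lemma integral_exp_half : ∫ x : ℝ, Real.exp (-(1/2) * x ^ 2) = Real.sqrt (2 * π) := by
  have h := integral_gaussian (1/2 : ℝ)
  rw [show π / (1/2:ℝ) = 2*π by ring] at h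
  simpa using h

lemma integrable_exp_half : Integrable (fun x : ℝ => Real.exp (-(1/2) * x ^ 2)) := by
  simpa using integrable_exp_neg_mul_sq (by norm_num : (0:ℝ) < 1/2)

lemma phi1_funext : phi1 = fun x => Real.exp (-(1/2) * x ^ 2) * (Real.sqrt (2*π))⁻¹ :=
  funext phi1_eq

lemma integrable_phi1 : Integrable phi1 := by
  rw [phi1_funext]
  exact integrable_exp_half.mul_const _

lemma integral_phi1 : ∫ x : ℝ, phi1 x = 1 := by
  simp_rw [phi1_eq]
  rw [integral_mul_const, integral_exp_half, mul_inv_cancel₀ sqrt_two_pi_pos.ne']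

lemma integrable_mul_exp_half : Integrable (fun x : ℝ => x * Real.exp (-(1/2) * x ^ 2)) := by
  have := integrable_rpow_mul_exp_neg_mul_sq (by norm_num : (0:ℝ) < 1/2)
    (by norm_num : (-1:ℝ) < 1)
  simpa [Real.rpow_one] using this

lemma integrable_sq_mul_exp_half : Integrable (fun x : ℝ => x ^ 2 * Real.exp (-(1/2) * x ^ 2)) := by
  have := integrable_rpow_mul_exp_neg_mul_sq (by norm_num : (0:ℝ) < 1/2)
    (by norm_num : (-1:ℝ) < 2)
  have h2 : ∀ x : ℝ, x ^ (2:ℝ) = x ^ 2 := fun x => by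
    rw [show (2:ℝ) = ((2:ℕ):ℝ) by norm_num, Real.rpow_natCast]
  simpa [h2] using this

lemma integrable_sq_phi1 : Integrable (fun x : ℝ => x ^ 2 * phi1 x) := by
  simp_rw [phi1_eq, ← mul_assoc]
  exact integrable_sq_mul_exp_half.mul_const _

lemma integrable_abs_phi1 : Integrable (fun x : ℝ => |x| * phi1 x) := by
  have h : Integrable (fun x : ℝ => x * phi1 x) := by
    simp_rw [phi1_eq, ← mul_assoc]
    exact integrable_mul_exp_half.mul_const _
  have := h.abs
  refine this.congr (Filter.Eventually.of_forall fun x => ?_)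
  show |x * phi1 x| = |x| * phi1 x
  rw [abs_mul, abs_of_nonneg (phi1_nonneg x)]

lemma integral_sq_mul_exp_half : ∫ x : ℝ, x ^ 2 * Real.exp (-(1/2) * x ^ 2) = Real.sqrt (2 * π) := by
  have hv : ∀ x : ℝ, HasDerivAt (fun y : ℝ => -Real.exp (-(1/2)*y^2))
      (x * Real.exp (-(1/2)*x^2)) x := by
    intro x
    have h1 : HasDerivAt (fun y : ℝ => -(1/2:ℝ)*y^2) (-x) x := by
      have := (hasDerivAt_pow 2 x).const_mul (-(1/2):ℝ)
      refine this.congr_deriv ?_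
      push_cast; ring
    have h2 := h1.exp
    refine h2.neg.congr_deriv ?_
    ring
  have hu : ∀ x : ℝ, HasDerivAt (fun y : ℝ => y) (1:ℝ) x := fun x => hasDerivAt_id x
  have huv' : Integrable ((fun x : ℝ => x) * fun x => x * Real.exp (-(1/2)*x^2)) := by
    refine integrable_sq_mul_exp_half.congr (Filter.Eventually.of_forall fun x => ?_)
    show x ^ 2 * Real.exp (-(1/2)*x^2) = x * (x * Real.exp (-(1/2)*x^2))
    ring
  have hu'v : Integrable ((fun _ : ℝ => (1:ℝ)) * fun x => -Real.exp (-(1/2)*x^2)) := by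
    refine integrable_exp_half.neg.congr (Filter.Eventually.of_forall fun x => ?_)
    show -Real.exp (-(1/2)*x^2) = 1 * (-Real.exp (-(1/2)*x^2))
    ring
  have huv : Integrable ((fun x : ℝ => x) * fun x => -Real.exp (-(1/2)*x^2)) := by
    refine integrable_mul_exp_half.neg.congr (Filter.Eventually.of_forall fun x => ?_)
    show -(x * Real.exp (-(1/2)*x^2)) = x * (-Real.exp (-(1/2)*x^2))
    ring
  have key := integral_mul_deriv_eq_deriv_mul_of_integrable (fun x _ => hu x) (fun x _ => hv x) huv' hu'v huv
  have h1 : ∫ x : ℝ, x * (x * Real.exp (-(1/2)*x^2)) = ∫ x : ℝ, x^2 * Real.exp (-(1/2)*x^2) := by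
    congr 1; funext x; ring
  have h2 : ∫ x : ℝ, (1:ℝ) * (-Real.exp (-(1/2)*x^2)) = -Real.sqrt (2*π) := by
    simp_rw [one_mul]
    rw [integral_neg, integral_exp_half]
  rw [h1, h2] at key
  rw [key]; ring

lemma integral_sq_phi1 : ∫ x : ℝ, x ^ 2 * phi1 x = 1 := by
  simp_rw [phi1_eq, ← mul_assoc]
  rw [integral_mul_const, integral_sq_mul_exp_half, mul_inv_cancel₀ sqrt_two_pi_pos.ne']


variable {p : ℝ}

lemma cp_pos (hp1 : 0 < p) (hp2 : p < 1) (x : ℝ) : 0 < cp p x :=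
  add_pos (mul_pos hp1 (Real.exp_pos _)) (mul_pos (by linarith) (Real.exp_pos _))

lemma log_cp_le (hp1 : 0 < p) (hp2 : p < 1) (x : ℝ) : Real.log (cp p x) ≤ |x| := by
  have h : cp p x ≤ Real.exp |x| := by
    have h1 : Real.exp x ≤ Real.exp |x| := Real.exp_le_exp.2 (le_abs_self x)
    have h2 : Real.exp (-x) ≤ Real.exp |x| := Real.exp_le_exp.2 (neg_le_abs x)
    calc cp p x ≤ p * Real.exp |x| + (1 - p) * Real.exp |x| := by
          unfold cp
          gcongr <;> linarith
      _ = Real.exp |x| := by ring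
  calc Real.log (cp p x) ≤ Real.log (Real.exp |x|) := by
        apply Real.log_le_log (cp_pos hp1 hp2 x) h
    _ = |x| := Real.log_exp _

lemma le_log_cp (hp1 : 1/2 < p) (hp2 : p < 1) (x : ℝ) :
    Real.log (1 - p) + |x| ≤ Real.log (cp p x) := by
  have hp0 : 0 < 1 - p := by linarith
  have h : (1 - p) * Real.exp |x| ≤ cp p x := by
    rcases le_or_gt 0 x with hx | hx
    · have : (1 - p) * Real.exp |x| ≤ p * Real.exp x := by
        rw [abs_of_nonneg hx]
        nlinarith [Real.exp_pos x]
      unfold cp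
      nlinarith [mul_pos (by linarith : (0:ℝ) < 1 - p) (Real.exp_pos (-x))]
    · have : (1 - p) * Real.exp |x| = (1 - p) * Real.exp (-x) := by
        rw [abs_of_neg hx]
      unfold cp
      nlinarith [mul_pos (by linarith : (0:ℝ) < p) (Real.exp_pos x)]
  calc Real.log (1 - p) + |x| = Real.log ((1 - p) * Real.exp |x|) := by
        rw [Real.log_mul hp0.ne' (Real.exp_pos _).ne', Real.log_exp]
    _ ≤ Real.log (cp p x) := Real.log_le_log (mul_pos hp0 (Real.exp_pos _)) h

lemma abs_log_cp_le (hp1 : 1/2 < p) (hp2 : p < 1) (x : ℝ) :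
    |Real.log (cp p x)| ≤ -Real.log (1 - p) + |x| := by
  have h1 := log_cp_le (by linarith) hp2 x
  have h2 := le_log_cp hp1 hp2 x
  have h3 : Real.log (1 - p) ≤ 0 := Real.log_nonpos (by linarith) (by linarith)
  rw [abs_le]
  constructor <;> [skip; skip] <;> nlinarith [abs_nonneg x]

lemma continuous_cp : Continuous (cp p) := by
  unfold cp
  fun_prop

lemma continuous_log_cp (hp1 : 0 < p) (hp2 : p < 1) :
    Continuous (fun x => Real.log (cp p x)) :=
  continuous_cp.log fun x => (cp_pos hp1 hp2 x).ne'

lemma integrable_logcp_phi (hp1 : 1/2 < p) (hp2 : p < 1) (c : ℝ) :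
    Integrable (fun t : ℝ => Real.log (cp p (c * t)) * phi1 t) := by
  have hmaj : Integrable (fun t : ℝ => (-Real.log (1 - p)) * phi1 t + |c| * (|t| * phi1 t)) :=
    (integrable_phi1.const_mul _).add (integrable_abs_phi1.const_mul _)
  refine hmaj.mono' ?_ (Filter.Eventually.of_forall fun t => ?_)
  · exact (((continuous_log_cp (by linarith) hp2).comp
      (continuous_const.mul continuous_id)).mul
      (by unfold phi1; fun_prop)).aestronglyMeasurable
  · have h1 := abs_log_cp_le hp1 hp2 (c * t)
    have h2 : |c * t| ≤ |c| * |t| := by rw [abs_mul]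
    have h0 := phi1_nonneg t
    rw [Real.norm_eq_abs, abs_mul, abs_of_nonneg h0]
    calc |Real.log (cp p (c * t))| * phi1 t
        ≤ (-Real.log (1 - p) + |c| * |t|) * phi1 t := by nlinarith
      _ = -Real.log (1 - p) * phi1 t + |c| * (|t| * phi1 t) := by ring


end AuxNegLoglik

section AuxNegLoglik2

variable {d : ℕ}

lemma norm_sq_eq (y : E d) : ‖y‖ ^ 2 = ∑ i, (y i) ^ 2 := by
  rw [EuclideanSpace.norm_eq, Real.sq_sqrt (by positivity)]
  simp [sq_abs]

lemma gpdf_std_eq (y : E d) : gpdf d 0 1 y = ∏ i, phi1 (y i) := by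
  have h2π : (0:ℝ) ≤ 2 * π := by positivity
  have hpow : ((2:ℝ) * π * 1) ^ (-(d:ℝ)/2) = ((Real.sqrt (2*π)) ^ d)⁻¹ := by
    rw [mul_one, Real.sqrt_eq_rpow, ← Real.rpow_natCast ((2*π) ^ ((1:ℝ)/2)) d,
      ← Real.rpow_mul h2π, ← Real.rpow_neg h2π]
    congr 1
    ring
  have hsum : (∑ i, (-(y i)^2/2)) = -‖y‖^2/(2*1) := by
    rw [← Finset.sum_div, Finset.sum_neg_distrib, norm_sq_eq y, mul_one]
  calc gpdf d 0 1 y = ((Real.sqrt (2*π))^d)⁻¹ * Real.exp (∑ i, (-(y i)^2/2)) := by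
        rw [gpdf, hpow, sub_zero, hsum]
    _ = (∏ i : Fin d, Real.exp (-(y i)^2/2)) * (((Real.sqrt (2*π))⁻¹)^d) := by
        rw [Real.exp_sum, inv_pow]; ring
    _ = ∏ i, phi1 (y i) := by
        simp only [phi1, div_eq_mul_inv]
        rw [Finset.prod_mul_distrib, Finset.prod_const, Finset.card_univ, Fintype.card_fin]

lemma coord_symm (x : Fin d → ℝ) (i : Fin d) :
    (MeasurableEquiv.toLp 2 (Fin d → ℝ)) x i = x i := rfl

lemma integral_transfer (F : E d → ℝ) :
    ∫ z : E d, F z = ∫ x : Fin d → ℝ, F ((MeasurableEquiv.toLp 2 (Fin d → ℝ)) x) :=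
  (((EuclideanSpace.volume_preserving_symm_measurableEquiv_toLp (Fin d)).symm _).integral_comp' F).symm

lemma integrable_transfer {F : E d → ℝ}
    (h : Integrable fun x : Fin d → ℝ => F ((MeasurableEquiv.toLp 2 (Fin d → ℝ)) x)) :
    Integrable F :=
  (((EuclideanSpace.volume_preserving_symm_measurableEquiv_toLp (Fin d)).symm _).integrable_comp_emb
    (MeasurableEquiv.measurableEmbedding _)).1 h

lemma integrable_gpdf : Integrable (gpdf d 0 1) := by
  apply integrable_transfer
  refine (Integrable.fintype_prod (f := fun _ : Fin d => phi1)
    (fun _ => integrable_phi1)).congr (Filter.Eventually.of_forall fun x => ?_)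
  exact (gpdf_std_eq _).symm

lemma integral_gpdf : ∫ z : E d, gpdf d 0 1 z = 1 := by
  rw [integral_transfer]
  have : ∀ x : Fin d → ℝ, gpdf d 0 1 ((MeasurableEquiv.toLp 2 (Fin d → ℝ)) x)
      = ∏ i, phi1 (x i) := fun x => by rw [gpdf_std_eq]; rfl
  simp_rw [this]
  rw [integral_fintype_prod_volume_eq_prod (f := fun _ : Fin d => phi1)]
  simp [integral_phi1]

/-- product form with one special coordinate -/
lemma prod_special (i0 : Fin d) (G : ℝ → ℝ) (x : Fin d → ℝ) :
    (∏ i, phi1 (x i)) * G (x i0)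
      = ∏ i, (if i = i0 then phi1 (x i) * G (x i) else phi1 (x i)) := by
  have : ∀ i : Fin d, (if i = i0 then phi1 (x i) * G (x i) else phi1 (x i))
      = phi1 (x i) * (if i = i0 then G (x i) else 1) := by
    intro i; by_cases h : i = i0 <;> simp [h]
  simp_rw [this]
  rw [Finset.prod_mul_distrib, Finset.prod_ite_eq' Finset.univ i0 (fun i => G (x i))]
  simp

lemma integrable_special (i0 : Fin d) {G : ℝ → ℝ}
    (hG : Integrable (fun t : ℝ => phi1 t * G t)) :
    Integrable (fun z : E d => gpdf d 0 1 z * G (z i0)) := by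
  apply integrable_transfer
  have key : ∀ x : Fin d → ℝ,
      gpdf d 0 1 ((MeasurableEquiv.toLp 2 (Fin d → ℝ)) x) * G (x i0)
        = ∏ i, (if i = i0 then phi1 (x i) * G (x i) else phi1 (x i)) := by
    intro x
    rw [show gpdf d 0 1 ((MeasurableEquiv.toLp 2 (Fin d → ℝ)) x) = ∏ i, phi1 (x i)
      from by rw [gpdf_std_eq]; rfl]
    exact prod_special i0 G x
  refine (Integrable.fintype_prod
    (f := fun i t => if i = i0 then phi1 t * G t else phi1 t) ?_).congr
    (Filter.Eventually.of_forall fun x => (key x).symm)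
  intro i
  by_cases h : i = i0
  · simpa [h] using hG
  · simpa [h] using integrable_phi1

lemma integral_special (i0 : Fin d) {G : ℝ → ℝ}
    (hG : Integrable (fun t : ℝ => phi1 t * G t)) :
    ∫ z : E d, gpdf d 0 1 z * G (z i0) = ∫ t : ℝ, phi1 t * G t := by
  rw [integral_transfer]
  have key : ∀ x : Fin d → ℝ,
      gpdf d 0 1 ((MeasurableEquiv.toLp 2 (Fin d → ℝ)) x)
        * G ((MeasurableEquiv.toLp 2 (Fin d → ℝ)) x i0)
        = ∏ i, (if i = i0 then phi1 (x i) * G (x i) else phi1 (x i)) := by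
    intro x
    rw [show gpdf d 0 1 ((MeasurableEquiv.toLp 2 (Fin d → ℝ)) x) = ∏ i, phi1 (x i)
      from by rw [gpdf_std_eq]; rfl, coord_symm]
    exact prod_special i0 G x
  simp_rw [key]
  rw [integral_fintype_prod_volume_eq_prod (f := fun i t => if i = i0 then phi1 t * G t else phi1 t)]
  have : ∀ i : Fin d, (∫ t : ℝ, if i = i0 then phi1 t * G t else phi1 t)
      = if i = i0 then (∫ t : ℝ, phi1 t * G t) else 1 := by
    intro i; by_cases h : i = i0 <;> simp [h, integral_phi1]
  simp_rw [this]
  rw [Finset.prod_ite_eq' Finset.univ i0 (fun _ => ∫ t : ℝ, phi1 t * G t)]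
  simp

lemma integrable_gpdf_mul_sq : Integrable (fun z : E d => gpdf d 0 1 z * ‖z‖ ^ 2) := by
  have key : ∀ z : E d, gpdf d 0 1 z * ‖z‖ ^ 2
      = ∑ j, gpdf d 0 1 z * (z j) ^ 2 := by
    intro z
    rw [norm_sq_eq, Finset.mul_sum]
  refine (integrable_finset_sum Finset.univ fun j _ => ?_).congr
    (Filter.Eventually.of_forall fun z => (key z).symm)
  exact integrable_special (G := fun t => t ^ 2) j (integrable_sq_phi1.congr
    (Filter.Eventually.of_forall fun t => by ring))

lemma integral_gpdf_mul_sq : ∫ z : E d, gpdf d 0 1 z * ‖z‖ ^ 2 = d := by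
  have key : ∀ z : E d, gpdf d 0 1 z * ‖z‖ ^ 2
      = ∑ j, gpdf d 0 1 z * (z j) ^ 2 := by
    intro z; rw [norm_sq_eq, Finset.mul_sum]
  simp_rw [key]
  rw [integral_finset_sum (f := fun (j : Fin d) (z : E d) => gpdf d 0 1 z * (z j) ^ 2)
    Finset.univ (fun j _ => integrable_special (G := fun t => t ^ 2) j
    (integrable_sq_phi1.congr (Filter.Eventually.of_forall fun t => by ring)))]
  have : ∀ j : Fin d, ∫ z : E d, gpdf d 0 1 z * (z j) ^ 2 = 1 := by
    intro j
    rw [integral_special (G := fun t => t ^ 2) j (integrable_sq_phi1.congr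
      (Filter.Eventually.of_forall fun t => by ring))]
    rw [show (∫ t : ℝ, phi1 t * t ^ 2) = ∫ t : ℝ, t ^ 2 * phi1 t from by
      congr 1; funext t; ring]
    exact integral_sq_phi1
  simp [this]


lemma comp_isometry_integral (f : E d ≃ₗᵢ[ℝ] E d) (F : E d → ℝ) :
    ∫ z : E d, F (f z) = ∫ z : E d, F z :=
  f.measurePreserving.integral_comp' (f := f.toHomeomorph.toMeasurableEquiv) F

lemma comp_isometry_integrable (f : E d ≃ₗᵢ[ℝ] E d) {F : E d → ℝ}
    (h : Integrable F) : Integrable fun z => F (f z) :=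
  (f.measurePreserving.integrable_comp_emb
    (f.toHomeomorph.toMeasurableEquiv.measurableEmbedding)).2 h

lemma gpdf_isometry (f : E d ≃ₗᵢ[ℝ] E d) (z : E d) :
    gpdf d 0 1 (f z) = gpdf d 0 1 z := by
  unfold gpdf
  rw [sub_zero, sub_zero, f.norm_map]

lemma gauss_proj (hd : 0 < d) (θ : E d) {F : ℝ → ℝ}
    (hFi : Integrable fun t : ℝ => F (‖θ‖ * t) * phi1 t) :
    (Integrable fun z : E d => gpdf d 0 1 z * F ((inner ℝ θ z : ℝ))) ∧
    (∫ z : E d, gpdf d 0 1 z * F ((inner ℝ θ z : ℝ))) = ∫ t : ℝ, F (‖θ‖ * t) * phi1 t := by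
  have i0 : Fin d := ⟨0, hd⟩
  rcases eq_or_ne θ 0 with rfl | hθ
  · constructor
    · simp only [inner_zero_left]
      exact integrable_gpdf.mul_const _
    · simp only [inner_zero_left, norm_zero, zero_mul]
      rw [MeasureTheory.integral_mul_const, integral_gpdf,
        MeasureTheory.integral_const_mul, integral_phi1]
      ring
  · have hθn : ‖θ‖ ≠ 0 := norm_ne_zero_iff.2 hθ
    set u : E d := ‖θ‖⁻¹ • θ with hu
    have hnu : ‖u‖ = 1 := by
      rw [hu, norm_smul, norm_inv, norm_norm, inv_mul_cancel₀ hθn]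
    set e0 : E d := EuclideanSpace.single i0 1 with he0def
    have he0 : ‖e0‖ = 1 := by
      rw [he0def, EuclideanSpace.norm_single, norm_one]
    obtain ⟨f, hf⟩ : ∃ f : E d ≃ₗᵢ[ℝ] E d, f e0 = u :=
      ⟨Submodule.reflection (ℝ ∙ (e0 - u))ᗮ, Submodule.reflection_sub (by rw [he0, hnu])⟩
    have hinner : ∀ z : E d, (inner ℝ θ z : ℝ) = ‖θ‖ * (f.symm z i0) := by
      intro z
      have h2 : (inner ℝ u z : ℝ) = f.symm z i0 := by
        have h3 := f.inner_map_map e0 (f.symm z)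
        rw [hf, f.apply_symm_apply] at h3
        rw [h3, he0def, EuclideanSpace.inner_single_left]
        simp
      have h1 : θ = ‖θ‖ • u := by
        rw [hu, smul_smul, mul_inv_cancel₀ hθn, one_smul]
      calc (inner ℝ θ z : ℝ) = (inner ℝ (‖θ‖ • u) z : ℝ) := by rw [← h1]
        _ = ‖θ‖ * (inner ℝ u z : ℝ) := real_inner_smul_left _ _ _
        _ = ‖θ‖ * (f.symm z i0) := by rw [h2]
    set G : ℝ → ℝ := fun t => F (‖θ‖ * t) with hG
    have hGint : Integrable (fun t : ℝ => phi1 t * G t) :=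
      hFi.congr (Filter.Eventually.of_forall fun t => by rw [hG]; ring)
    have hfun : ∀ z : E d, gpdf d 0 1 z * F ((inner ℝ θ z : ℝ))
        = (fun w : E d => gpdf d 0 1 w * G (w i0)) (f.symm z) := by
      intro z
      simp only [hG]
      rw [hinner z, ← gpdf_isometry f.symm z]
    constructor
    · refine (comp_isometry_integrable f.symm (integrable_special i0 hGint)).congr
        (Filter.Eventually.of_forall fun z => (hfun z).symm)
    · calc (∫ z : E d, gpdf d 0 1 z * F ((inner ℝ θ z : ℝ)))
          = ∫ z : E d, (fun w : E d => gpdf d 0 1 w * G (w i0)) (f.symm z) := by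
            exact integral_congr_ae (Filter.Eventually.of_forall hfun)
        _ = ∫ w : E d, gpdf d 0 1 w * G (w i0) := by
            simpa using comp_isometry_integral f.symm (fun w : E d => gpdf d 0 1 w * G (w i0))
        _ = ∫ t : ℝ, phi1 t * G t := integral_special i0 hGint
        _ = ∫ t : ℝ, F (‖θ‖ * t) * phi1 t := by
            congr 1; funext t; rw [hG]; ring

lemma log_mixPdf {p : ℝ} (hp1 : 0 < p) (hp2 : p < 1) {s : ℝ} (hs : 0 < s) (θ z : E d) :
    Real.log (mixPdf p d 0 θ s z)
      = (-(d:ℝ)/2) * Real.log (2*π*s) + (-((‖z‖^2 + ‖θ‖^2) / (2*s)))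
        + Real.log (cp p ((inner ℝ θ z : ℝ) / s)) := by
  have h2πs : (0:ℝ) < 2*π*s := by positivity
  have hzp : ‖z - -θ‖^2 = ‖z‖^2 + 2*(inner ℝ θ z : ℝ) + ‖θ‖^2 := by
    rw [sub_neg_eq_add, norm_add_sq_real, real_inner_comm]
  have hzm : ‖z - θ‖^2 = ‖z‖^2 - 2*(inner ℝ θ z : ℝ) + ‖θ‖^2 := by
    rw [norm_sub_sq_real, real_inner_comm]
  have key : mixPdf p d 0 θ s z
      = (2*π*s) ^ (-(d:ℝ)/2)
        * (Real.exp (-((‖z‖^2 + ‖θ‖^2)/(2*s))) * cp p ((inner ℝ θ z : ℝ)/s)) := by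
    unfold mixPdf gpdf cp
    rw [zero_sub, zero_add, hzp, hzm]
    rw [show -(‖z‖^2 + 2*(inner ℝ θ z:ℝ) + ‖θ‖^2)/(2*s)
        = -((‖z‖^2+‖θ‖^2)/(2*s)) + -((inner ℝ θ z:ℝ)/s) from by field_simp; ring]
    rw [show -(‖z‖^2 - 2*(inner ℝ θ z:ℝ) + ‖θ‖^2)/(2*s)
        = -((‖z‖^2+‖θ‖^2)/(2*s)) + (inner ℝ θ z:ℝ)/s from by field_simp; ring]
    rw [Real.exp_add, Real.exp_add]
    ring
  rw [key, Real.log_mul (Real.rpow_pos_of_pos h2πs _).ne'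
    (mul_pos (Real.exp_pos _) (cp_pos hp1 hp2 _)).ne',
    Real.log_mul (Real.exp_pos _).ne' (cp_pos hp1 hp2 _).ne', Real.log_rpow h2πs, Real.log_exp]
  ring

end AuxNegLoglik2

/-- radial form of the negative population log-likelihood on the
hypersurface `σ² = 1 − ‖θ‖²/d`. -/
theorem neg_loglik_radial
    (p : ℝ) (hp : p ∈ Set.Ioo (1 / 2 : ℝ) 1) (d : ℕ) (hd : 1 ≤ d)
    (θ : E d) (hθ : ‖θ‖ < Real.sqrt d) :
    -(∫ z : E d, gpdf d 0 1 z * Real.log (mixPdf p d 0 θ (1 - ‖θ‖ ^ 2 / d) z))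
      = (d / 2 : ℝ) * Real.log (2 * π * (1 - ‖θ‖ ^ 2 / d))
        + ((d : ℝ) + ‖θ‖ ^ 2) / (2 * (1 - ‖θ‖ ^ 2 / d))
        - gexp (fun z => Real.log (cp p (‖θ‖ * z / (1 - ‖θ‖ ^ 2 / d)))) := by
  have hp1 : (0:ℝ) < p := by linarith [hp.1]
  have hd0 : 0 < d := hd
  have hdR : (0:ℝ) < d := by exact_mod_cast hd0
  have hθ2 : ‖θ‖ ^ 2 < (d:ℝ) := (Real.lt_sqrt (norm_nonneg θ)).1 hθ
  set s : ℝ := 1 - ‖θ‖ ^ 2 / (d:ℝ) with hsdef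
  have hs : 0 < s := by
    have : ‖θ‖ ^ 2 / (d:ℝ) < 1 := (div_lt_one hdR).2 hθ2
    rw [hsdef]; linarith
  -- integrability pieces
  have hI1 : Integrable (fun z : E d => gpdf d 0 1 z * ((-(d:ℝ)/2) * Real.log (2*π*s))) :=
    integrable_gpdf.mul_const _
  have hI2 : Integrable (fun z : E d => gpdf d 0 1 z * (-((‖z‖^2 + ‖θ‖^2)/(2*s)))) := by
    refine ((integrable_gpdf_mul_sq.const_mul (-(2*s)⁻¹)).add
      (integrable_gpdf.const_mul (-(‖θ‖^2/(2*s))))).congr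
      (Filter.Eventually.of_forall fun z => ?_)
    show -(2*s)⁻¹ * (gpdf d 0 1 z * ‖z‖^2) + -(‖θ‖^2/(2*s)) * gpdf d 0 1 z
      = gpdf d 0 1 z * (-((‖z‖^2 + ‖θ‖^2)/(2*s)))
    ring
  have hFi : Integrable fun t : ℝ =>
      (fun x : ℝ => Real.log (cp p (x / s))) (‖θ‖ * t) * phi1 t := by
    refine (integrable_logcp_phi hp.1 hp.2 (‖θ‖/s)).congr
      (Filter.Eventually.of_forall fun t => ?_)
    show Real.log (cp p (‖θ‖/s*t)) * phi1 t = Real.log (cp p (‖θ‖*t/s)) * phi1 t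
    rw [show ‖θ‖/s*t = ‖θ‖*t/s from by ring]
  obtain ⟨hI3, hv3⟩ := gauss_proj hd0 θ (F := fun x : ℝ => Real.log (cp p (x / s))) hFi
  have hI3' : Integrable (fun z : E d => gpdf d 0 1 z
      * Real.log (cp p ((inner ℝ θ z : ℝ)/s))) := hI3
  have hv3' : (∫ z : E d, gpdf d 0 1 z * Real.log (cp p ((inner ℝ θ z : ℝ)/s)))
      = ∫ t : ℝ, Real.log (cp p (‖θ‖ * t / s)) * phi1 t := hv3
  have hsplit : (∫ z : E d, gpdf d 0 1 z * Real.log (mixPdf p d 0 θ s z))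
      = (∫ z : E d, gpdf d 0 1 z * ((-(d:ℝ)/2) * Real.log (2*π*s)))
        + (∫ z : E d, gpdf d 0 1 z * (-((‖z‖^2 + ‖θ‖^2)/(2*s))))
        + (∫ z : E d, gpdf d 0 1 z * Real.log (cp p ((inner ℝ θ z : ℝ)/s))) := by
    have h12 : Integrable (fun z : E d => gpdf d 0 1 z * ((-(d:ℝ)/2) * Real.log (2*π*s))
        + gpdf d 0 1 z * (-((‖z‖^2 + ‖θ‖^2)/(2*s)))) := hI1.add hI2
    rw [← integral_add hI1 hI2, ← integral_add h12 hI3']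
    refine integral_congr_ae (Filter.Eventually.of_forall fun z => ?_)
    simp only [Pi.add_apply]
    rw [log_mixPdf hp1 hp.2 hs θ z]
    ring
  have hv1 : (∫ z : E d, gpdf d 0 1 z * ((-(d:ℝ)/2) * Real.log (2*π*s)))
      = (-(d:ℝ)/2) * Real.log (2*π*s) := by
    rw [MeasureTheory.integral_mul_const, integral_gpdf, one_mul]
  have hv2 : (∫ z : E d, gpdf d 0 1 z * (-((‖z‖^2 + ‖θ‖^2)/(2*s))))
      = -(((d:ℝ) + ‖θ‖^2)/(2*s)) := by
    have heq : (∫ z : E d, gpdf d 0 1 z * (-((‖z‖^2 + ‖θ‖^2)/(2*s))))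
        = ∫ z : E d, (-(2*s)⁻¹ * (gpdf d 0 1 z * ‖z‖^2)
            + -(‖θ‖^2/(2*s)) * gpdf d 0 1 z) :=
      integral_congr_ae (Filter.Eventually.of_forall fun z => by ring)
    rw [heq, integral_add (integrable_gpdf_mul_sq.const_mul _) (integrable_gpdf.const_mul _),
      MeasureTheory.integral_const_mul, MeasureTheory.integral_const_mul,
      integral_gpdf_mul_sq, integral_gpdf]
    ring
  have hgexp : gexp (fun z => Real.log (cp p (‖θ‖ * z / s)))
      = ∫ t : ℝ, Real.log (cp p (‖θ‖ * t / s)) * phi1 t := rfl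
  rw [hsplit, hv1, hv2, hv3', ← hgexp]
  ring

end OMDA
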